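/- Let ρ be a density matrix on ℂ^d and let Ψ, Φ, Γ be quantum channels on ℂ^d with Kraus operators {L_i}_{i=1}^m, {K_j}_{j=1}^n, {M_k}_{k=1}^p respectively. Then Q_ρ(Ψ)·Q_ρ(Φ)·Q_ρ(Γ) ≥ (1/8) · √( (Σ_{i,j} |tr([L_i, K_j†] ρ)|²) · (Σ_{i,k} |tr([L_i, M_k†] ρ)|²) · (Σ_{k,j} |tr([M_k, K_j†] ρ)|²) ). -/

import Mathlib

open Matrix
open scoped ComplexOrder

noncomputable section

/-- The positive semidefinite square root of a positive semidefinite matrix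
(the definition `Matrix.PosSemidef.sqrt` of the older Mathlib, since removed). -/
def Matrix.PosSemidef.sqrt {n 𝕜 : Type*} [Fintype n] [RCLike 𝕜] [DecidableEq n]
    {A : Matrix n n 𝕜} (hA : A.PosSemidef) : Matrix n n 𝕜 :=
  hA.1.eigenvectorUnitary.1 * diagonal ((↑) ∘ (√·) ∘ hA.1.eigenvalues) *
    (star hA.1.eigenvectorUnitary : Matrix n n 𝕜)

/-- Variance of an operator `K` with respect to a state `ρ`:
`V_ρ(K) = ½ tr((K†K + KK†)ρ) − |tr(Kρ)|²`. -/
def opVar {d : ℕ} (ρ K : Matrix (Fin d) (Fin d) ℂ) : ℝ :=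
  (((Kᴴ * K + K * Kᴴ) * ρ).trace).re / 2 - ‖((K * ρ).trace)‖ ^ 2

/-- Variance of a channel with Kraus operators `K i`: `V_ρ(Φ) = Σ_i V_ρ(K_i)`. -/
def chanVar {d n : ℕ} (ρ : Matrix (Fin d) (Fin d) ℂ)
    (K : Fin n → Matrix (Fin d) (Fin d) ℂ) : ℝ :=
  ∑ i, opVar ρ (K i)

/-- Wigner–Yanase skew information of a channel with Kraus operators `K i`:
`I_ρ(Φ) = ½ Σ_i ‖[√ρ, K_i]‖_F²`, where `√ρ` is the PSD square root of `ρ`. -/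
def chanSkew {d n : ℕ} (ρ : Matrix (Fin d) (Fin d) ℂ) (hρ : ρ.PosSemidef)
    (K : Fin n → Matrix (Fin d) (Fin d) ℂ) : ℝ :=
  (1 / 2) * ∑ i,
    (((hρ.sqrt * K i - K i * hρ.sqrt)ᴴ * (hρ.sqrt * K i - K i * hρ.sqrt)).trace).re

/-- Quantum uncertainty of a channel:
`Q_ρ(Φ) = √(V_ρ(Φ)² − (V_ρ(Φ) − I_ρ(Φ))²)`. -/
def chanQ {d n : ℕ} (ρ : Matrix (Fin d) (Fin d) ℂ) (hρ : ρ.PosSemidef)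
    (K : Fin n → Matrix (Fin d) (Fin d) ℂ) : ℝ :=
  Real.sqrt ((chanVar ρ K) ^ 2 - (chanVar ρ K - chanSkew ρ hρ K) ^ 2)

/-! Write `s = √ρ` and, for an operator `B`, `X = B - tr(Bρ)`. Since `s² = ρ`,
`tr([L, B†] ρ) = tr([s, L] {s, X†})`, so Cauchy–Schwarz for the Frobenius inner product gives
`|tr([L, B†] ρ)|² ≤ ‖[s, L]‖² ‖{s, X†}‖²`, while a parallelogram-type identity gives
`‖{s, X†}‖² + ‖[s, B]‖² = 4 V_ρ(B)`. Summing over Kraus operators,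
`Σ |tr([L_i, K_j†] ρ)|² ≤ 4 I_ρ(Ψ) (2 V_ρ(Φ) - I_ρ(Φ))`, and the same with `Ψ`, `Φ` exchanged.
As `Q_ρ(Φ)² = I_ρ(Φ) (2 V_ρ(Φ) - I_ρ(Φ))`, the geometric mean of the two bounds is
`4 Q_ρ(Ψ) Q_ρ(Φ)`; multiplying the three pairwise bounds proves the theorem. -/

namespace Matrix

section RCLike

variable {n 𝕜 : Type*} [Fintype n] [RCLike 𝕜]

lemma PosSemidef.sqrt_mul_self [DecidableEq n] {A : Matrix n n 𝕜} (hA : A.PosSemidef) :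
    hA.sqrt * hA.sqrt = A := by
  have hD : diagonal ((RCLike.ofReal ∘ (√·) ∘ hA.1.eigenvalues) : n → 𝕜) *
      diagonal (RCLike.ofReal ∘ (√·) ∘ hA.1.eigenvalues) =
        diagonal (RCLike.ofReal ∘ hA.1.eigenvalues) := by
    rw [diagonal_mul_diagonal]
    congr 1; funext i
    simp only [Function.comp_apply, ← RCLike.ofReal_mul,
      Real.mul_self_sqrt (hA.eigenvalues_nonneg i)]
  conv_rhs => rw [hA.1.spectral_theorem, Unitary.conjStarAlgAut_apply]
  simp only [PosSemidef.sqrt, Matrix.mul_assoc]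
  rw [← Matrix.mul_assoc (star _ : Matrix n n 𝕜) _ _, Unitary.coe_star_mul_self, Matrix.one_mul,
    ← Matrix.mul_assoc _ _ (star _ : Matrix n n 𝕜), hD]

lemma PosSemidef.isHermitian_sqrt [DecidableEq n] {A : Matrix n n 𝕜} (hA : A.PosSemidef) :
    hA.sqrt.IsHermitian := by
  have hD : star (RCLike.ofReal ∘ (√·) ∘ hA.1.eigenvalues : n → 𝕜) =
      RCLike.ofReal ∘ (√·) ∘ hA.1.eigenvalues := by
    funext i; simp
  rw [IsHermitian, PosSemidef.sqrt, conjTranspose_mul, conjTranspose_mul, diagonal_conjTranspose,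
    hD, ← star_eq_conjTranspose, ← star_eq_conjTranspose, star_star, Matrix.mul_assoc]

lemma re_trace_conjTranspose_mul_self_nonneg (A : Matrix n n 𝕜) :
    0 ≤ RCLike.re (Aᴴ * A).trace :=
  (RCLike.nonneg_iff.mp (posSemidef_conjTranspose_mul_self A).trace_nonneg).1

open scoped InnerProductSpace in
lemma norm_trace_mul_sq_le (X Y : Matrix n n 𝕜) :
    ‖(X * Y).trace‖ ^ 2 ≤ RCLike.re (Xᴴ * X).trace * RCLike.re (Yᴴ * Y).trace := by
  have inner_eq (A B : Matrix n n 𝕜) :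
      ⟪WithLp.toLp 2 A.vec, WithLp.toLp 2 B.vec⟫_𝕜 = (Aᴴ * B).trace := by
    rw [EuclideanSpace.inner_eq_star_dotProduct, dotProduct_comm]
    exact star_vec_dotProduct_vec A B
  have h := inner_mul_inner_self_le (𝕜 := 𝕜) (WithLp.toLp 2 Xᴴ.vec : EuclideanSpace 𝕜 (n × n))
    (WithLp.toLp 2 Y.vec)
  rwa [norm_inner_symm, ← sq, inner_eq, inner_eq, inner_eq, conjTranspose_conjTranspose,
    trace_mul_comm X, ← conjTranspose_mul, trace_conjTranspose, norm_star] at h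

end RCLike

section CommRing

variable {n R : Type*} [Fintype n] [CommRing R]

lemma trace_mul_mul_mul_cycle (A B C D : Matrix n n R) :
    (A * (B * (C * D))).trace = (B * (C * (D * A))).trace := by
  rw [trace_mul_comm, Matrix.mul_assoc, Matrix.mul_assoc]

lemma trace_commutator_mul_mul_self (s L Y : Matrix n n R) :
    ((L * Y - Y * L) * (s * s)).trace = ((s * L - L * s) * (s * Y + Y * s)).trace := by
  simp only [sub_mul, mul_add, trace_add, trace_sub, Matrix.mul_assoc]
  rw [trace_mul_mul_mul_cycle s L Y s, ← trace_mul_mul_mul_cycle Y L s s,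
    trace_mul_mul_mul_cycle s L s Y]
  ring

lemma trace_anticommutator_add_trace_commutator [StarRing R] {s : Matrix n n R}
    (hs : s.IsHermitian) (Y : Matrix n n R) :
    ((s * Y + Y * s)ᴴ * (s * Y + Y * s)).trace + ((s * Yᴴ - Yᴴ * s)ᴴ * (s * Yᴴ - Yᴴ * s)).trace =
      2 * ((Yᴴ * Y + Y * Yᴴ) * (s * s)).trace := by
  simp only [conjTranspose_add, conjTranspose_sub, conjTranspose_mul, conjTranspose_conjTranspose,
    hs.eq]
  simp only [sub_mul, mul_sub, add_mul, mul_add, trace_add, trace_sub, Matrix.mul_assoc]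
  rw [← trace_mul_mul_mul_cycle Y Yᴴ s s, trace_mul_mul_mul_cycle s Yᴴ Y s,
    ← trace_mul_mul_mul_cycle Yᴴ Y s s, trace_mul_mul_mul_cycle s Y Yᴴ s,
    trace_mul_mul_mul_cycle s Y s Yᴴ, trace_mul_mul_mul_cycle Y s Yᴴ s,
    trace_mul_mul_mul_cycle s Yᴴ s Y]
  ring

lemma commutator_sub_smul_one [DecidableEq n] (A B : Matrix n n R) (c : R) :
    A * (B - c • 1) - (B - c • 1) * A = A * B - B * A := by
  simp only [mul_sub, sub_mul, Matrix.mul_smul, Matrix.smul_mul, mul_one, one_mul]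
  abel

end CommRing

end Matrix

section Channel

variable {d : ℕ}

def centered (ρ B : Matrix (Fin d) (Fin d) ℂ) : Matrix (Fin d) (Fin d) ℂ :=
  B - (B * ρ).trace • 1

def opSkew (ρ : Matrix (Fin d) (Fin d) ℂ) (hρ : ρ.PosSemidef) (A : Matrix (Fin d) (Fin d) ℂ) : ℝ :=
  (1 / 2) * ((hρ.sqrt * A - A * hρ.sqrt)ᴴ * (hρ.sqrt * A - A * hρ.sqrt)).trace.re

lemma chanSkew_eq_sum_opSkew {n : ℕ} (ρ : Matrix (Fin d) (Fin d) ℂ) (hρ : ρ.PosSemidef)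
    (K : Fin n → Matrix (Fin d) (Fin d) ℂ) : chanSkew ρ hρ K = ∑ i, opSkew ρ hρ (K i) :=
  Finset.mul_sum _ _ _

lemma opSkew_nonneg (ρ : Matrix (Fin d) (Fin d) ℂ) (hρ : ρ.PosSemidef)
    (A : Matrix (Fin d) (Fin d) ℂ) : 0 ≤ opSkew ρ hρ A :=
  mul_nonneg (by norm_num) <| by
    simpa using re_trace_conjTranspose_mul_self_nonneg (hρ.sqrt * A - A * hρ.sqrt)

lemma centered_conjTranspose {ρ : Matrix (Fin d) (Fin d) ℂ} (hρ : ρ.IsHermitian)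
    (B : Matrix (Fin d) (Fin d) ℂ) : (centered ρ B)ᴴ = centered ρ Bᴴ := by
  rw [centered, centered, conjTranspose_sub, conjTranspose_smul, conjTranspose_one,
    ← trace_conjTranspose, conjTranspose_mul, hρ.eq, trace_mul_comm]

lemma two_mul_opVar_eq {ρ : Matrix (Fin d) (Fin d) ℂ} (hρ : ρ.IsHermitian) (htr : ρ.trace = 1)
    (B : Matrix (Fin d) (Fin d) ℂ) :
    2 * opVar ρ B =
      (((centered ρ B)ᴴ * centered ρ B + centered ρ B * (centered ρ B)ᴴ) * ρ).trace.re := by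
  have hc : (Bᴴ * ρ).trace = star (B * ρ).trace := by
    rw [← trace_conjTranspose, conjTranspose_mul, hρ.eq, trace_mul_comm]
  rw [centered_conjTranspose hρ]
  simp only [centered, mul_sub, sub_mul, add_mul, Matrix.mul_smul, Matrix.smul_mul, mul_one,
    one_mul, trace_add, trace_sub, trace_smul, smul_eq_mul, htr, hc]
  have hnorm : star (B * ρ).trace * (B * ρ).trace = ((‖(B * ρ).trace‖ ^ 2 : ℝ) : ℂ) := by
    rw [Complex.sq_norm, Complex.normSq_eq_conj_mul_self]
    rfl
  simp only [mul_comm (B * ρ).trace, hnorm, opVar, add_mul, trace_add, Complex.add_re,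
    Complex.sub_re, Complex.ofReal_re]
  ring

lemma re_trace_anticommutator_centered {ρ : Matrix (Fin d) (Fin d) ℂ} (hρ : ρ.PosSemidef)
    (htr : ρ.trace = 1) (B : Matrix (Fin d) (Fin d) ℂ) :
    ((hρ.sqrt * (centered ρ B)ᴴ + (centered ρ B)ᴴ * hρ.sqrt)ᴴ *
        (hρ.sqrt * (centered ρ B)ᴴ + (centered ρ B)ᴴ * hρ.sqrt)).trace.re =
      4 * opVar ρ B - 2 * opSkew ρ hρ B := by
  have hcomm : hρ.sqrt * centered ρ B - centered ρ B * hρ.sqrt = hρ.sqrt * B - B * hρ.sqrt :=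
    commutator_sub_smul_one _ _ _
  have key := congrArg Complex.re <|
    trace_anticommutator_add_trace_commutator hρ.isHermitian_sqrt (centered ρ B)ᴴ
  rw [conjTranspose_conjTranspose, hcomm, hρ.sqrt_mul_self, add_comm (centered ρ B * _)] at key
  simp only [Complex.add_re, Complex.mul_re, Complex.re_ofNat, Complex.im_ofNat, zero_mul,
    sub_zero, ← two_mul_opVar_eq hρ.1 htr] at key
  rw [opSkew]
  linarith

lemma opSkew_le_two_mul_opVar {ρ : Matrix (Fin d) (Fin d) ℂ} (hρ : ρ.PosSemidef)
    (htr : ρ.trace = 1) (B : Matrix (Fin d) (Fin d) ℂ) : opSkew ρ hρ B ≤ 2 * opVar ρ B := by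
  have := re_trace_anticommutator_centered hρ htr B
  have := re_trace_conjTranspose_mul_self_nonneg
    (hρ.sqrt * (centered ρ B)ᴴ + (centered ρ B)ᴴ * hρ.sqrt)
  simp only [RCLike.re_to_complex] at this
  linarith

lemma norm_trace_commutator_mul_sq_le {ρ : Matrix (Fin d) (Fin d) ℂ} (hρ : ρ.PosSemidef)
    (htr : ρ.trace = 1) (L B : Matrix (Fin d) (Fin d) ℂ) :
    ‖((L * Bᴴ - Bᴴ * L) * ρ).trace‖ ^ 2 ≤
      2 * opSkew ρ hρ L * (4 * opVar ρ B - 2 * opSkew ρ hρ B) := by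
  have hcomm : L * (centered ρ B)ᴴ - (centered ρ B)ᴴ * L = L * Bᴴ - Bᴴ * L := by
    rw [centered_conjTranspose hρ.1]
    exact commutator_sub_smul_one _ _ _
  have htrace : ((L * Bᴴ - Bᴴ * L) * ρ).trace = ((hρ.sqrt * L - L * hρ.sqrt) *
      (hρ.sqrt * (centered ρ B)ᴴ + (centered ρ B)ᴴ * hρ.sqrt)).trace := by
    rw [← hcomm, ← trace_commutator_mul_mul_self, hρ.sqrt_mul_self]
  rw [htrace, ← re_trace_anticommutator_centered hρ htr B, opSkew]
  have := norm_trace_mul_sq_le (hρ.sqrt * L - L * hρ.sqrt)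
    (hρ.sqrt * (centered ρ B)ᴴ + (centered ρ B)ᴴ * hρ.sqrt)
  simp only [RCLike.re_to_complex] at this
  linarith

lemma norm_trace_commutator_mul_comm {ρ : Matrix (Fin d) (Fin d) ℂ} (hρ : ρ.IsHermitian)
    (A B : Matrix (Fin d) (Fin d) ℂ) :
    ‖((A * Bᴴ - Bᴴ * A) * ρ).trace‖ = ‖((B * Aᴴ - Aᴴ * B) * ρ).trace‖ := by
  rw [← norm_star, ← trace_conjTranspose, conjTranspose_mul, hρ.eq, trace_mul_comm,
    conjTranspose_sub, conjTranspose_mul, conjTranspose_mul, conjTranspose_conjTranspose]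

lemma chanQ_nonneg {n : ℕ} (ρ : Matrix (Fin d) (Fin d) ℂ) (hρ : ρ.PosSemidef)
    (K : Fin n → Matrix (Fin d) (Fin d) ℂ) : 0 ≤ chanQ ρ hρ K :=
  Real.sqrt_nonneg _

lemma sq_chanQ {n : ℕ} {ρ : Matrix (Fin d) (Fin d) ℂ} (hρ : ρ.PosSemidef) (htr : ρ.trace = 1)
    (K : Fin n → Matrix (Fin d) (Fin d) ℂ) :
    chanQ ρ hρ K ^ 2 = chanSkew ρ hρ K * (2 * chanVar ρ K - chanSkew ρ hρ K) := by
  have hskew : 0 ≤ chanSkew ρ hρ K := by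
    rw [chanSkew_eq_sum_opSkew]
    exact Finset.sum_nonneg fun i _ => opSkew_nonneg ρ hρ (K i)
  have hvar : chanSkew ρ hρ K ≤ 2 * chanVar ρ K := by
    rw [chanSkew_eq_sum_opSkew, chanVar, Finset.mul_sum]
    exact Finset.sum_le_sum fun i _ => opSkew_le_two_mul_opVar hρ htr (K i)
  rw [chanQ, Real.sq_sqrt] <;> nlinarith

lemma sum_sum_norm_trace_commutator_sq_le {m n : ℕ} {ρ : Matrix (Fin d) (Fin d) ℂ}
    (hρ : ρ.PosSemidef) (htr : ρ.trace = 1) (L : Fin m → Matrix (Fin d) (Fin d) ℂ)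
    (K : Fin n → Matrix (Fin d) (Fin d) ℂ) :
    ∑ i, ∑ j, ‖((L i * (K j)ᴴ - (K j)ᴴ * L i) * ρ).trace‖ ^ 2 ≤
      4 * chanSkew ρ hρ L * (2 * chanVar ρ K - chanSkew ρ hρ K) := by
  calc _ ≤ ∑ i, ∑ j, 2 * opSkew ρ hρ (L i) * (4 * opVar ρ (K j) - 2 * opSkew ρ hρ (K j)) := by
        gcongr with i _ j _
        exact norm_trace_commutator_mul_sq_le hρ htr (L i) (K j)
    _ = (∑ i, 2 * opSkew ρ hρ (L i)) * ∑ j, (4 * opVar ρ (K j) - 2 * opSkew ρ hρ (K j)) :=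
        (Finset.sum_mul_sum _ _ _ _).symm
    _ = _ := by
        rw [← Finset.mul_sum, Finset.sum_sub_distrib, ← Finset.mul_sum, ← Finset.mul_sum,
          ← chanSkew_eq_sum_opSkew, ← chanSkew_eq_sum_opSkew, chanVar]
        ring

lemma sum_sum_norm_trace_commutator_sq_le_chanQ {m n : ℕ} {ρ : Matrix (Fin d) (Fin d) ℂ}
    (hρ : ρ.PosSemidef) (htr : ρ.trace = 1) (L : Fin m → Matrix (Fin d) (Fin d) ℂ)
    (K : Fin n → Matrix (Fin d) (Fin d) ℂ) :
    ∑ i, ∑ j, ‖((L i * (K j)ᴴ - (K j)ᴴ * L i) * ρ).trace‖ ^ 2 ≤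
      4 * (chanQ ρ hρ L * chanQ ρ hρ K) := by
  set S := ∑ i, ∑ j, ‖((L i * (K j)ᴴ - (K j)ᴴ * L i) * ρ).trace‖ ^ 2
  have hLK : S ≤ 4 * chanSkew ρ hρ L * (2 * chanVar ρ K - chanSkew ρ hρ K) :=
    sum_sum_norm_trace_commutator_sq_le hρ htr L K
  have hKL : S ≤ 4 * chanSkew ρ hρ K * (2 * chanVar ρ L - chanSkew ρ hρ L) := by
    simp only [S, Finset.sum_comm (γ := Fin m), norm_trace_commutator_mul_comm hρ.1 (L _)]
    exact sum_sum_norm_trace_commutator_sq_le hρ htr K L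
  have hS : 0 ≤ S := by positivity
  have hQ : 0 ≤ 4 * (chanQ ρ hρ L * chanQ ρ hρ K) :=
    mul_nonneg (by norm_num) (mul_nonneg (chanQ_nonneg ρ hρ L) (chanQ_nonneg ρ hρ K))
  refine (pow_le_pow_iff_left₀ hS hQ two_ne_zero).1 ?_
  calc S ^ 2 = S * S := sq S
    _ ≤ (4 * chanSkew ρ hρ L * (2 * chanVar ρ K - chanSkew ρ hρ K)) *
          (4 * chanSkew ρ hρ K * (2 * chanVar ρ L - chanSkew ρ hρ L)) :=
        mul_le_mul hLK hKL hS (hS.trans hLK)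
    _ = (4 * (chanQ ρ hρ L * chanQ ρ hρ K)) ^ 2 := by
        rw [mul_pow, mul_pow, sq_chanQ hρ htr, sq_chanQ hρ htr]
        ring

end Channel

theorem stmt_12_general {d m n p : ℕ}
    (ρ : Matrix (Fin d) (Fin d) ℂ) (hρ : ρ.PosSemidef) (htr : ρ.trace = 1)
    (L : Fin m → Matrix (Fin d) (Fin d) ℂ)
    (K : Fin n → Matrix (Fin d) (Fin d) ℂ)
    (M : Fin p → Matrix (Fin d) (Fin d) ℂ) :
    chanQ ρ hρ L * chanQ ρ hρ K * chanQ ρ hρ M ≥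
      (1 / 8) * Real.sqrt
        ((∑ i, ∑ j, ‖(((L i * (K j)ᴴ - (K j)ᴴ * L i) * ρ).trace)‖ ^ 2) *
         (∑ i, ∑ k, ‖(((L i * (M k)ᴴ - (M k)ᴴ * L i) * ρ).trace)‖ ^ 2) *
         (∑ k, ∑ j, ‖(((M k * (K j)ᴴ - (K j)ᴴ * M k) * ρ).trace)‖ ^ 2)) := by
  have hL := chanQ_nonneg ρ hρ L
  have hK := chanQ_nonneg ρ hρ K
  have hM := chanQ_nonneg ρ hρ M
  calc (1 / 8) * Real.sqrt _
      ≤ (1 / 8) * Real.sqrt ((8 * (chanQ ρ hρ L * chanQ ρ hρ K * chanQ ρ hρ M)) ^ 2) := by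
        gcongr
        calc _ ≤ (4 * (chanQ ρ hρ L * chanQ ρ hρ K)) * (4 * (chanQ ρ hρ L * chanQ ρ hρ M)) *
              (4 * (chanQ ρ hρ M * chanQ ρ hρ K)) := by
              gcongr
              · exact sum_sum_norm_trace_commutator_sq_le_chanQ hρ htr L K
              · exact sum_sum_norm_trace_commutator_sq_le_chanQ hρ htr L M
              · exact sum_sum_norm_trace_commutator_sq_le_chanQ hρ htr M K
          _ = _ := by ring
    _ = chanQ ρ hρ L * chanQ ρ hρ K * chanQ ρ hρ M := by
        rw [Real.sqrt_sq (by positivity)]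
        ring

/-- Product-form uncertainty relation for three quantum channels. -/
theorem stmt_12 {d m n p : ℕ}
    (ρ : Matrix (Fin d) (Fin d) ℂ) (hρ : ρ.PosSemidef) (htr : ρ.trace = 1)
    (L : Fin m → Matrix (Fin d) (Fin d) ℂ) (hL : ∑ i, (L i)ᴴ * L i = 1)
    (K : Fin n → Matrix (Fin d) (Fin d) ℂ) (hK : ∑ j, (K j)ᴴ * K j = 1)
    (M : Fin p → Matrix (Fin d) (Fin d) ℂ) (hM : ∑ k, (M k)ᴴ * M k = 1) :
    chanQ ρ hρ L * chanQ ρ hρ K * chanQ ρ hρ M ≥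
      (1 / 8) * Real.sqrt
        ((∑ i, ∑ j, ‖(((L i * (K j)ᴴ - (K j)ᴴ * L i) * ρ).trace)‖ ^ 2) *
         (∑ i, ∑ k, ‖(((L i * (M k)ᴴ - (M k)ᴴ * L i) * ρ).trace)‖ ^ 2) *
         (∑ k, ∑ j, ‖(((M k * (K j)ᴴ - (K j)ᴴ * M k) * ρ).trace)‖ ^ 2)) :=
  stmt_12_general ρ hρ htr L K M
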